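/- If F is a field in which every unit is a square, then the canonical epimorphism K^MW_n(F) → K^M_n(F) is an isomorphism for all n ≥ 0, and the canonical epimorphism K^MW_n(F) → K^W_n(F) is an isomorphism for all n < 0. -/

import Mathlib

noncomputable section

/-- Generators of the Milnor–Witt K-theory ring: a symbol `[u]` for each unit `u`
and the element `η`. -/
inductive MWGen (F : Type) [Field F] : Type
  | of : Fˣ → MWGen F
  | eta : MWGen F

/-- The defining relations KMW1–KMW4 of Milnor–Witt K-theory, imposed on the free
(noncommutative) ℤ-algebra on the generators. -/
inductive MWRel (F : Type) [Field F] :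
    FreeAlgebra ℤ (MWGen F) → FreeAlgebra ℤ (MWGen F) → Prop
  | steinberg (a : Fˣ) (h1 : (a : F) ≠ 1) :
      MWRel F
        (FreeAlgebra.ι ℤ (MWGen.of a) *
          FreeAlgebra.ι ℤ (MWGen.of (Units.mk0 (1 - (a : F)) (sub_ne_zero_of_ne h1.symm))))
        0
  | mul_rel (a b : Fˣ) :
      MWRel F (FreeAlgebra.ι ℤ (MWGen.of (a * b)))
        (FreeAlgebra.ι ℤ (MWGen.of a) + FreeAlgebra.ι ℤ (MWGen.of b) +
          FreeAlgebra.ι ℤ MWGen.eta * FreeAlgebra.ι ℤ (MWGen.of a) *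
            FreeAlgebra.ι ℤ (MWGen.of b))
  | comm_rel (u : Fˣ) :
      MWRel F (FreeAlgebra.ι ℤ MWGen.eta * FreeAlgebra.ι ℤ (MWGen.of u))
        (FreeAlgebra.ι ℤ (MWGen.of u) * FreeAlgebra.ι ℤ MWGen.eta)
  | hyp :
      MWRel F
        (FreeAlgebra.ι ℤ MWGen.eta *
          (FreeAlgebra.ι ℤ MWGen.eta * FreeAlgebra.ι ℤ (MWGen.of (-1)) + 2))
        0

/-- The Milnor–Witt K-theory ring `K^MW_*(F)` (all degrees together). -/
def KMW (F : Type) [Field F] : Type := RingQuot (MWRel F)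

instance (F : Type) [Field F] : Ring (KMW F) := inferInstanceAs (Ring (RingQuot (MWRel F)))

/-- The symbol `[u] ∈ K^MW_1(F)`. -/
def mw {F : Type} [Field F] (u : Fˣ) : KMW F :=
  RingQuot.mkRingHom (MWRel F) (FreeAlgebra.ι ℤ (MWGen.of u))

/-- The element `η ∈ K^MW_{-1}(F)`. -/
def mweta (F : Type) [Field F] : KMW F :=
  RingQuot.mkRingHom (MWRel F) (FreeAlgebra.ι ℤ MWGen.eta)

/-- The degree-`n` homogeneous component of `K^MW_*(F)`: the additive subgroup spanned
by the monomials `η^m [u₁]⋯[u_r]` with `r - m = n`. -/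
def KMWcomp (F : Type) [Field F] (n : ℤ) : AddSubgroup (KMW F) :=
  AddSubgroup.closure {x | ∃ (m r : ℕ) (v : Fin r → Fˣ),
    (r : ℤ) - (m : ℤ) = n ∧ x = (mweta F) ^ m * (List.ofFn fun i => mw (v i)).prod}

/-- The hyperbolic element `h = η[-1] + 2 ∈ K^MW_0(F)`. -/
def hKMW (F : Type) [Field F] : KMW F := mweta F * mw (-1) + 2

/-- Witt K-theory `K^W_*(F) := K^MW_*(F)/(h)`. -/
def KW (F : Type) [Field F] : Type :=
  RingQuot (fun x y : KMW F => x = hKMW F ∧ y = 0)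

instance (F : Type) [Field F] : Ring (KW F) :=
  inferInstanceAs (Ring (RingQuot (fun x y : KMW F => x = hKMW F ∧ y = 0)))

/-- The quotient map `K^MW_*(F) → K^W_*(F)`. -/
def kwq (F : Type) [Field F] : KMW F →+* KW F :=
  RingQuot.mkRingHom (fun x y : KMW F => x = hKMW F ∧ y = 0)

/-- The class `⟦a⟧ ∈ K^W_1(F)` of the symbol `[a]`. -/
def kw {F : Type} [Field F] (a : Fˣ) : KW F := kwq F (mw a)

/-- The degree-`n` homogeneous component of `K^W_*(F)`. -/
def KWcomp (F : Type) [Field F] (n : ℤ) : AddSubgroup (KW F) :=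
  AddSubgroup.map (kwq F).toAddMonoidHom (KMWcomp F n)

/-- Milnor K-theory realized as the quotient `K^MW_*(F)/(η)`. -/
def KM (F : Type) [Field F] : Type :=
  RingQuot (fun x y : KMW F => x = mweta F ∧ y = 0)

instance (F : Type) [Field F] : Ring (KM F) :=
  inferInstanceAs (Ring (RingQuot (fun x y : KMW F => x = mweta F ∧ y = 0)))

/-- The quotient map `K^MW_*(F) → K^M_*(F)`. -/
def kmq (F : Type) [Field F] : KMW F →+* KM F :=
  RingQuot.mkRingHom (fun x y : KMW F => x = mweta F ∧ y = 0)

/-- The degree-`n` homogeneous component of `K^M_*(F)`. -/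
def KMcomp (F : Type) [Field F] (n : ℤ) : AddSubgroup (KM F) :=
  AddSubgroup.map (kmq F).toAddMonoidHom (KMWcomp F n)

/-!
Write `⟨a⟩ = 1 + η[a]`. The relations make `a ↦ ⟨a⟩` multiplicative with `(⟨a⟩ - 1) h = 0`,
and Milnor's identity `-a = (1 - a) / (1 - a⁻¹)` with the Steinberg relation turns this into
`⟨a²⟩ = 1`. So if every unit is a square, `η[u] = 0` for all `u`, hence `ηh = 0` becomes
`2η = 0`, and every monomial containing both `η` and a symbol vanishes. Then `η ↦ 0, [u] ↦ [u]`
defines `K^M_*(F) → K^MW_*(F)`, a left inverse of the quotient map in degrees `n ≥ 0`. In degree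
`n = -k < 0` the component is `{0, η^k}`, and `η^k` survives in `K^W` because the rank modulo 2,
`η ↦ 1, [u] ↦ 0`, kills `h`.
-/

theorem Set.LeftInvOn.addSubgroup_closure {A B FA FB : Type*} [AddGroup A] [AddGroup B]
    [FunLike FA A B] [AddMonoidHomClass FA A B] [FunLike FB B A] [AddMonoidHomClass FB B A]
    {f : FA} {g : FB} {s : Set A} (h : Set.LeftInvOn g f s) :
    Set.LeftInvOn g f (AddSubgroup.closure s) := by
  intro x hx
  induction hx using AddSubgroup.closure_induction with
  | mem x hx => exact h hx
  | zero => simp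
  | add x y _ _ hx hy => simp [hx, hy]
  | neg x _ hx => simp [hx]

namespace KMW

variable {F : Type} [Field F]

section lift

variable {R : Type*} [Ring R]

def lift (u : Fˣ → R) (e : R) (steinberg : ∀ a b : Fˣ, (a : F) + b = 1 → u a * u b = 0)
    (mul : ∀ a b, u (a * b) = u a + u b + e * u a * u b) (comm : ∀ a, e * u a = u a * e)
    (hyp : e * (e * u (-1) + 2) = 0) : KMW F →+* R :=
  RingQuot.lift ⟨(FreeAlgebra.lift ℤ fun | .of a => u a | .eta => e).toRingHom, by
    intro x y h
    induction h with
    | steinberg a h1 => simpa using steinberg _ _ (by simp)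
    | mul_rel a b => simpa using mul a b
    | comm_rel a => simpa using comm a
    | hyp => simpa [map_ofNat] using hyp⟩

variable (u : Fˣ → R) (e : R) (steinberg : ∀ a b : Fˣ, (a : F) + b = 1 → u a * u b = 0)
    (mul : ∀ a b, u (a * b) = u a + u b + e * u a * u b) (comm : ∀ a, e * u a = u a * e)
    (hyp : e * (e * u (-1) + 2) = 0)

@[simp]
theorem lift_mw (a : Fˣ) : lift u e steinberg mul comm hyp (mw a) = u a :=
  (RingQuot.lift_mkRingHom_apply _ _ _).trans (by simp)

@[simp]
theorem lift_mweta : lift u e steinberg mul comm hyp (mweta F) = e :=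
  (RingQuot.lift_mkRingHom_apply _ _ _).trans (by simp)

end lift

theorem mw_mul (a b : Fˣ) : mw (a * b) = mw a + mw b + mweta F * mw a * mw b := by
  have h := RingQuot.mkRingHom_rel (MWRel.mul_rel (F := F) a b)
  simp only [map_add, map_mul] at h
  exact h

theorem commute_mweta_mw (a : Fˣ) : Commute (mweta F) (mw a) := by
  have h := RingQuot.mkRingHom_rel (MWRel.comm_rel (F := F) a)
  simp only [map_mul] at h
  exact h

theorem mw_mul_mw_eq_zero_of_add_eq_one {a b : Fˣ} (hab : (a : F) + b = 1) :
    mw a * mw b = 0 := by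
  have ha : (a : F) ≠ 1 := fun ha => b.ne_zero (by linear_combination hab - ha)
  obtain rfl : b = Units.mk0 (1 - (a : F)) (sub_ne_zero_of_ne ha.symm) :=
    Units.ext (by simp [← hab])
  have h := RingQuot.mkRingHom_rel (MWRel.steinberg (F := F) a ha)
  simp only [map_mul, map_zero] at h
  exact h

theorem mweta_mul_hKMW : mweta F * hKMW F = 0 := by
  have h := RingQuot.mkRingHom_rel (MWRel.hyp (F := F))
  simp only [map_add, map_mul, map_ofNat, map_zero] at h
  exact h

theorem mweta_mul_mw_mul_mw_comm (a b : Fˣ) :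
    mweta F * mw a * mw b = mweta F * mw b * mw a := by
  have h := (mw_mul a b).symm.trans (mul_comm a b ▸ mw_mul b a)
  rwa [add_comm (mw b), add_right_inj] at h

def pfister (a : Fˣ) : KMW F := 1 + mweta F * mw a

theorem pfister_sub_one (a : Fˣ) : pfister a - 1 = mweta F * mw a :=
  add_sub_cancel_left _ _

theorem pfister_sub_one_mul_pfister_sub_one (a b : Fˣ) :
    (pfister a - 1) * (pfister b - 1) = mweta F ^ 2 * (mw a * mw b) := by
  rw [pfister_sub_one, pfister_sub_one, mul_assoc, ← mul_assoc (mw a),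
    ← (commute_mweta_mw a).eq]
  noncomm_ring

theorem pfister_mul (a b : Fˣ) : pfister (a * b) = pfister a * pfister b := by
  calc pfister (a * b)
      = 1 + mweta F * mw a + mweta F * mw b + mweta F ^ 2 * (mw a * mw b) := by
        rw [pfister, mw_mul]; noncomm_ring
    _ = 1 + (pfister a - 1) + (pfister b - 1) + (pfister a - 1) * (pfister b - 1) := by
        rw [pfister_sub_one_mul_pfister_sub_one, pfister_sub_one, pfister_sub_one]
    _ = pfister a * pfister b := by noncomm_ring

theorem mweta_mul_mw_mul_hKMW (a : Fˣ) : mweta F * mw a * hKMW F = 0 := by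
  calc mweta F * mw a * hKMW F
      = mweta F * (mweta F * mw a * mw (-1)) + mweta F * mw a * 2 := by
        rw [hKMW, mul_add, mul_assoc (mweta F) (mw a), ← mul_assoc (mw a),
          ← (commute_mweta_mw a).eq]
    _ = mweta F * hKMW F * mw a := by
        rw [mweta_mul_mw_mul_mw_comm, hKMW, mul_assoc (mweta F) (mw a) 2,
          (Commute.ofNat_right (mw a) 2).eq]
        noncomm_ring
    _ = 0 := by rw [mweta_mul_hKMW, zero_mul]

theorem hKMW_eq_pfister_add_one : hKMW F = pfister (-1) + 1 := by
  rw [hKMW, pfister, add_comm 1, add_assoc, one_add_one_eq_two]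

theorem pfister_add_pfister_neg (a : Fˣ) : pfister a + pfister (-a) = pfister (-1) + 1 := by
  have h := mweta_mul_mw_mul_hKMW a
  rw [← pfister_sub_one, hKMW_eq_pfister_add_one] at h
  rw [← mul_neg_one a, pfister_mul, ← sub_eq_zero, ← h]
  noncomm_ring

theorem pfister_one : pfister (1 : Fˣ) = 1 :=
  add_right_cancel ((pfister_add_pfister_neg 1).trans (add_comm _ _))

theorem pfister_mul_pfister_inv (a : Fˣ) : pfister a * pfister a⁻¹ = 1 := by
  rw [← pfister_mul, mul_inv_cancel, pfister_one]

theorem pfister_sub_one_mul_pfister_sub_one_of_add_eq_one {a b : Fˣ} (hab : (a : F) + b = 1) :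
    (pfister a - 1) * (pfister b - 1) = 0 := by
  rw [pfister_sub_one_mul_pfister_sub_one, mw_mul_mw_eq_zero_of_add_eq_one hab, mul_zero]

theorem pfister_sub_one_mul_pfister_neg_sub_one (a : Fˣ) :
    (pfister a - 1) * (pfister (-a) - 1) = 0 := by
  rcases eq_or_ne (a : F) 1 with ha | ha
  · rw [Units.val_eq_one.1 ha, pfister_one, sub_self, zero_mul]
  have ha' : (a : F)⁻¹ ≠ 1 := inv_ne_one.2 ha
  set b := Units.mk0 (1 - (a : F)) (sub_ne_zero_of_ne ha.symm)
  set c := Units.mk0 (1 - (a : F)⁻¹) (sub_ne_zero_of_ne ha'.symm)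
  have hb : (pfister a - 1) * (pfister b - 1) = 0 :=
    pfister_sub_one_mul_pfister_sub_one_of_add_eq_one (by simp [b])
  have hc : (pfister a - 1) * (pfister c - 1) = 0 := by
    have h := pfister_sub_one_mul_pfister_sub_one_of_add_eq_one (a := a⁻¹) (b := c) (by simp [c])
    calc (pfister a - 1) * (pfister c - 1)
        = -((pfister a * (pfister a⁻¹ - 1)) * (pfister c - 1)) := by
          rw [mul_sub (pfister a), pfister_mul_pfister_inv]; noncomm_ring
      _ = 0 := by rw [mul_assoc, h, mul_zero, neg_zero]
  have hbc : -a * c = b := Units.ext (by simp [b, c]; field_simp; ring)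
  calc (pfister a - 1) * (pfister (-a) - 1)
      = (pfister a - 1) * (pfister (-a) - 1) * (pfister c * pfister c⁻¹) := by
        rw [pfister_mul_pfister_inv, mul_one]
    _ = ((pfister a - 1) * (pfister b - 1) - (pfister a - 1) * (pfister c - 1)) * pfister c⁻¹ := by
        rw [← hbc, pfister_mul]; noncomm_ring
    _ = 0 := by rw [hb, hc, sub_zero, zero_mul]

theorem pfister_mul_self (a : Fˣ) : pfister (a * a) = 1 := by
  have hneg : pfister (-(a * a)) = pfister (-1) :=
    calc pfister (-(a * a)) = pfister a * pfister (-a) := by rw [← pfister_mul, mul_neg]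
      _ = (pfister a - 1) * (pfister (-a) - 1) + (pfister a + pfister (-a)) - 1 := by
          noncomm_ring
      _ = pfister (-1) := by
          rw [pfister_sub_one_mul_pfister_neg_sub_one, pfister_add_pfister_neg]; abel
  calc pfister (a * a) = pfister (-1) * pfister (-(a * a)) := by
        rw [← pfister_mul, neg_one_mul, neg_neg]
    _ = 1 := by rw [hneg, ← pfister_mul, neg_one_mul, neg_neg, pfister_one]

theorem mweta_mul_mw_eq_zero (hsq : ∀ u : Fˣ, ∃ v : Fˣ, v ^ 2 = u) (u : Fˣ) :
    mweta F * mw u = 0 := by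
  obtain ⟨v, rfl⟩ := hsq u
  rw [sq, ← pfister_sub_one, pfister_mul_self, sub_self]

theorem two_zsmul_mweta_pow_eq_zero (hsq : ∀ u : Fˣ, ∃ v : Fˣ, v ^ 2 = u) {k : ℕ} (hk : k ≠ 0) :
    (2 : ℤ) • mweta F ^ k = 0 := by
  obtain ⟨j, rfl⟩ := Nat.exists_eq_succ_of_ne_zero hk
  have h := mweta_mul_hKMW (F := F)
  rw [hKMW, mul_add, mweta_mul_mw_eq_zero hsq, mul_zero, zero_add] at h
  rw [pow_succ, ← mul_smul_comm, two_zsmul, ← mul_two, h, mul_zero]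

theorem mweta_pow_mul_prod_mw_eq_zero (hsq : ∀ u : Fˣ, ∃ v : Fˣ, v ^ 2 = u) {m r : ℕ}
    (v : Fin r → Fˣ) (hm : m ≠ 0) (hr : r ≠ 0) :
    mweta F ^ m * (List.ofFn fun i => mw (v i)).prod = 0 := by
  obtain ⟨m, rfl⟩ := Nat.exists_eq_succ_of_ne_zero hm
  obtain ⟨r, rfl⟩ := Nat.exists_eq_succ_of_ne_zero hr
  rw [List.ofFn_succ, List.prod_cons, pow_succ, mul_assoc, ← mul_assoc (mweta F),
    mweta_mul_mw_eq_zero hsq, zero_mul, mul_zero]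

end KMW

section Quotients

variable {F : Type} [Field F] {R : Type*} [Ring R]

def KM.lift (f : KMW F →+* R) (hf : f (mweta F) = 0) : KM F →+* R :=
  RingQuot.lift ⟨f, by rintro _ _ ⟨rfl, rfl⟩; rw [hf, map_zero]⟩

@[simp]
theorem KM.lift_kmq (f : KMW F →+* R) (hf : f (mweta F) = 0) (x : KMW F) :
    KM.lift f hf (kmq F x) = f x :=
  RingQuot.lift_mkRingHom_apply _ _ x

def KW.lift (f : KMW F →+* R) (hf : f (hKMW F) = 0) : KW F →+* R :=
  RingQuot.lift ⟨f, by rintro _ _ ⟨rfl, rfl⟩; rw [hf, map_zero]⟩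

@[simp]
theorem KW.lift_kwq (f : KMW F →+* R) (hf : f (hKMW F) = 0) (x : KMW F) :
    KW.lift f hf (kwq F x) = f x :=
  RingQuot.lift_mkRingHom_apply _ _ x

end Quotients

section Sections

variable {F : Type} [Field F]

open KMW

/-- On `K^W_0(F) = W(F)` this is the rank of a quadratic form modulo 2. -/
def KW.rankModTwo (F : Type) [Field F] : KW F →+* ZMod 2 :=
  KW.lift (KMW.lift (fun _ => 0) 1 (by simp) (by simp) (by simp) (by decide)) (by
    simp [hKMW, map_ofNat]; rfl)

@[simp]
theorem KW.rankModTwo_kwq_mweta : KW.rankModTwo F (kwq F (mweta F)) = 1 := by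
  simp [KW.rankModTwo]

def milnorSection (hsq : ∀ u : Fˣ, ∃ v : Fˣ, v ^ 2 = u) : KM F →+* KMW F :=
  KM.lift (KMW.lift mw 0 (fun _ _ => mw_mul_mw_eq_zero_of_add_eq_one)
    (fun a b => by simp [mw_mul, mweta_mul_mw_eq_zero hsq]) (by simp) (by simp)) (by simp)

def wittSection (hsq : ∀ u : Fˣ, ∃ v : Fˣ, v ^ 2 = u) {k : ℕ} (hk : k ≠ 0) : KW F →+ KMW F :=
  (ZMod.lift 2 ⟨zmultiplesHom _ (mweta F ^ k), two_zsmul_mweta_pow_eq_zero hsq hk⟩).comp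
    (KW.rankModTwo F).toAddMonoidHom

theorem wittSection_kwq_mweta_pow (hsq : ∀ u : Fˣ, ∃ v : Fˣ, v ^ 2 = u) {k : ℕ} (hk : k ≠ 0) :
    wittSection hsq hk (kwq F (mweta F ^ k)) = mweta F ^ k := by
  simp only [wittSection, AddMonoidHom.comp_apply, RingHom.toAddMonoidHom_eq_coe,
    AddMonoidHom.coe_coe, map_pow, KW.rankModTwo_kwq_mweta, one_pow]
  exact (ZMod.lift_coe 2 _ 1).trans (one_zsmul _)

theorem leftInvOn_milnorSection (hsq : ∀ u : Fˣ, ∃ v : Fˣ, v ^ 2 = u) {n : ℤ} (hn : 0 ≤ n) :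
    Set.LeftInvOn (milnorSection hsq) (kmq F) (KMWcomp F n) := by
  refine Set.LeftInvOn.addSubgroup_closure ?_
  rintro _ ⟨m, r, v, hrm, rfl⟩
  rcases eq_or_ne m 0 with rfl | hm
  · simp [milnorSection, map_list_prod, List.map_ofFn, Function.comp_def]
  · rw [mweta_pow_mul_prod_mw_eq_zero hsq v hm (by omega), map_zero, map_zero]

theorem leftInvOn_wittSection (hsq : ∀ u : Fˣ, ∃ v : Fˣ, v ^ 2 = u) {n : ℤ} (hn : n < 0) :
    Set.LeftInvOn (wittSection hsq (Int.natAbs_ne_zero.2 hn.ne)) (kwq F) (KMWcomp F n) := by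
  refine Set.LeftInvOn.addSubgroup_closure ?_
  rintro _ ⟨m, r, v, hrm, rfl⟩
  rcases eq_or_ne r 0 with rfl | hr
  · obtain rfl : m = n.natAbs := by omega
    rw [List.ofFn_zero, List.prod_nil, mul_one, wittSection_kwq_mweta_pow]
  · rw [mweta_pow_mul_prod_mw_eq_zero hsq v (by omega) hr, map_zero, map_zero]

end Sections

theorem stmt15 (F : Type) [Field F] (hsq : ∀ u : Fˣ, ∃ v : Fˣ, v ^ 2 = u) :
    (∀ n : ℤ, 0 ≤ n →
      (∀ x ∈ KMWcomp F n, ∀ y ∈ KMWcomp F n, kmq F x = kmq F y → x = y) ∧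
      (∀ z ∈ KMcomp F n, ∃ x ∈ KMWcomp F n, kmq F x = z)) ∧
    (∀ n : ℤ, n < 0 →
      (∀ x ∈ KMWcomp F n, ∀ y ∈ KMWcomp F n, kwq F x = kwq F y → x = y) ∧
      (∀ z ∈ KWcomp F n, ∃ x ∈ KMWcomp F n, kwq F x = z)) :=
  ⟨fun _ hn => ⟨(leftInvOn_milnorSection hsq hn).injOn, fun _ => AddSubgroup.mem_map.1⟩,
    fun _ hn => ⟨(leftInvOn_wittSection hsq hn).injOn, fun _ => AddSubgroup.mem_map.1⟩⟩
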